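/- arXiv:2002.00789 — 8 statements merged into one kernel-verified Lean document; each statement's English description precedes it below -/
import Mathlib

section
/- Let f(x, y, z; c) = x² + y² + z² + x·y·z + c. Then for all x, y, z one has the factorization f(2 − x², 2 − y², 2 − z²; −4) = f(x, y, z; −4) · f(−x, y, z; −4). In other words, the quadratic substitution (x, y, z) ↦ (2 − x², 2 − y², 2 − z²) induces an endomorphism of the Cayley cubic surface f(x, y, z; −4) = 0. -/
/-- The Fricke cubic polynomial `f(x,y,z;c) = x² + y² + z² + xyz + c`. -/
def frickeF (x y z c : ℂ) : ℂ := x ^ 2 + y ^ 2 + z ^ 2 + x * y * z + c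

/-- The quadratic substitution `(x,y,z) ↦ (2 − x², 2 − y², 2 − z²)` induces an
endomorphism of the Cayley cubic: `f(2−x², 2−y², 2−z²; −4) = f(x,y,z;−4)·f(−x,y,z;−4)`. -/
theorem cayley_endomorphism (x y z : ℂ) :
    frickeF (2 - x ^ 2) (2 - y ^ 2) (2 - z ^ 2) (-4) =
      frickeF x y z (-4) * frickeF (-x) y z (-4) := by
  unfold frickeF; ring
end

section
/- Let x, y be complex numbers with x³ + 420·x − 5600 ≠ 0, and suppose y² = (x³ + 420·x − 5600)·(x³ + 42·x² + 1120). Define u = −882000·(x − 14)/(x³ + 420·x − 5600) and v = 49000·(x³ − 21·x² − 140)·y/(x³ + 420·x − 5600)². Then v² = u³ + 4900·u² + 7031500·u + 2401000000. That is, (u, v) lies on the elliptic curve v² = u³ + 4900u² + 7031500u + 2401000000 whenever (x, y) lies on the genus-two curve y² = (x³ + 420x − 5600)(x³ + 42x² + 1120). -/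
/-!
Put `D = x³ + 420x − 5600`, so `u = N / D` with `N = −882000 (x − 14)` and
`v = M y / D²` with `M = 49000 (x³ − 21x² − 140)`. Using `y² = D · (x³ + 42x² + 1120)`,
both sides of the Weierstrass equation become fractions with denominator `D³`, and the
numerators agree by a polynomial identity in `x`.
-/

theorem cubic_div_eq {K : Type*} [Field K] (a b c N D : K) (hD : D ≠ 0) :
    (N / D) ^ 3 + a * (N / D) ^ 2 + b * (N / D) + c =
      (N ^ 3 + a * N ^ 2 * D + b * N * D ^ 2 + c * D ^ 3) / D ^ 3 := by
  field_simp

theorem genus_two_cover_numerator {R : Type*} [CommRing R] (x : R) :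
    (49000 * (x ^ 3 - 21 * x ^ 2 - 140)) ^ 2 * (x ^ 3 + 42 * x ^ 2 + 1120) =
      (-882000 * (x - 14)) ^ 3 + 4900 * (-882000 * (x - 14)) ^ 2 * (x ^ 3 + 420 * x - 5600)
        + 7031500 * (-882000 * (x - 14)) * (x ^ 3 + 420 * x - 5600) ^ 2
        + 2401000000 * (x ^ 3 + 420 * x - 5600) ^ 3 := by
  ring

/-- The degree-3 morphism from the genus-two curve
`y² = (x³ + 420x − 5600)(x³ + 42x² + 1120)` to the elliptic curve
`v² = u³ + 4900u² + 7031500u + 2401000000`. -/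
theorem genus_two_to_elliptic (x y : ℂ) (hx : x ^ 3 + 420 * x - 5600 ≠ 0)
    (hxy : y ^ 2 = (x ^ 3 + 420 * x - 5600) * (x ^ 3 + 42 * x ^ 2 + 1120)) :
    let u : ℂ := -882000 * (x - 14) / (x ^ 3 + 420 * x - 5600)
    let v : ℂ := 49000 * (x ^ 3 - 21 * x ^ 2 - 140) * y / (x ^ 3 + 420 * x - 5600) ^ 2
    v ^ 2 = u ^ 3 + 4900 * u ^ 2 + 7031500 * u + 2401000000 := by
  intro u v
  calc v ^ 2
      = (49000 * (x ^ 3 - 21 * x ^ 2 - 140)) ^ 2 * (x ^ 3 + 42 * x ^ 2 + 1120) /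
          (x ^ 3 + 420 * x - 5600) ^ 3 := by
        simp only [v, div_pow, mul_pow, hxy]
        field_simp
    _ = u ^ 3 + 4900 * u ^ 2 + 7031500 * u + 2401000000 := by
        rw [cubic_div_eq _ _ _ _ _ hx, genus_two_cover_numerator]
end

section
/- Let a, b be parameters and set R = 4·(a³ + b³) − a²·b² − 18·a·b + 27. Let x, y satisfy the genus-two curve equation R·y² + (4·x³ + b²·x² + 2·b·x + 1)·(x³ + a·x² + b·x + 1) = 0, and assume x³ + a·x² + b·x + 1 ≠ 0. Define u = x²/(x³ + a·x² + b·x + 1) and v = y·(x³ − b·x − 2)/(x³ + a·x² + b·x + 1)². Then R·v² = R·u³ + 2·(a·b² − 6·a² + 9·b)·u² + (12·a − b²)·u − 4. -/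
set_option maxRecDepth 10000 in
set_option maxHeartbeats 2000000 in
/-- The rational parametrisation of a genus-two curve with split Jacobian maps onto an
elliptic curve: with `R = 4(a³+b³) − a²b² − 18ab + 27`, if
`R·y² + (4x³ + b²x² + 2bx + 1)(x³ + ax² + bx + 1) = 0` and `x³ + ax² + bx + 1 ≠ 0`,
then `u = x²/(x³+ax²+bx+1)`, `v = y(x³−bx−2)/(x³+ax²+bx+1)²` satisfy
`R·v² = R·u³ + 2(ab² − 6a² + 9b)u² + (12a − b²)u − 4`. -/
theorem genus_two_split_jacobian (a b x y : ℂ)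
    (hden : x ^ 3 + a * x ^ 2 + b * x + 1 ≠ 0)
    (hcurve : (4 * (a ^ 3 + b ^ 3) - a ^ 2 * b ^ 2 - 18 * a * b + 27) * y ^ 2 +
      (4 * x ^ 3 + b ^ 2 * x ^ 2 + 2 * b * x + 1) * (x ^ 3 + a * x ^ 2 + b * x + 1) = 0) :
    let R : ℂ := 4 * (a ^ 3 + b ^ 3) - a ^ 2 * b ^ 2 - 18 * a * b + 27
    let u : ℂ := x ^ 2 / (x ^ 3 + a * x ^ 2 + b * x + 1)
    let v : ℂ := y * (x ^ 3 - b * x - 2) / (x ^ 3 + a * x ^ 2 + b * x + 1) ^ 2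
    R * v ^ 2 = R * u ^ 3 + 2 * (a * b ^ 2 - 6 * a ^ 2 + 9 * b) * u ^ 2 +
      (12 * a - b ^ 2) * u - 4 := by
  intro R u v
  have hD2 : (x ^ 3 + a * x ^ 2 + b * x + 1) ^ 2 ≠ 0 := pow_ne_zero _ hden
  have hD4 : (x ^ 3 + a * x ^ 2 + b * x + 1) ^ 4 ≠ 0 := pow_ne_zero _ hden
  apply mul_right_cancel₀ hD4
  have h1 : u * (x ^ 3 + a * x ^ 2 + b * x + 1) = x ^ 2 := div_mul_cancel₀ _ hden
  have h2 : v * (x ^ 3 + a * x ^ 2 + b * x + 1) ^ 2 = y * (x ^ 3 - b * x - 2) :=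
    div_mul_cancel₀ _ hD2
  linear_combination
    (4 * (a ^ 3 + b ^ 3) - a ^ 2 * b ^ 2 - 18 * a * b + 27) *
      (v * (x ^ 3 + a * x ^ 2 + b * x + 1) ^ 2 + y * (x ^ 3 - b * x - 2)) * h2 +
    (x ^ 3 - b * x - 2) ^ 2 * hcurve -
    ((4 * (a ^ 3 + b ^ 3) - a ^ 2 * b ^ 2 - 18 * a * b + 27) *
        (x ^ 3 + a * x ^ 2 + b * x + 1) *
        (u ^ 2 * (x ^ 3 + a * x ^ 2 + b * x + 1) ^ 2 +
          u * (x ^ 3 + a * x ^ 2 + b * x + 1) * x ^ 2 + x ^ 4) +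
      2 * (a * b ^ 2 - 6 * a ^ 2 + 9 * b) * (x ^ 3 + a * x ^ 2 + b * x + 1) ^ 2 *
        (u * (x ^ 3 + a * x ^ 2 + b * x + 1) + x ^ 2) +
      (12 * a - b ^ 2) * (x ^ 3 + a * x ^ 2 + b * x + 1) ^ 3) * h1
end

section
/- Let a be a parameter and let x, y satisfy y² + (a + 1)·(x² − 1)·(3·x⁴ + 3·(a − 1)·x² + a² − a + 1) = 0 with x² ≠ 1. Define u = −(x² + a)/(x² − 1) and v = y/(x² − 1)². Then u³ + 1 = v²; that is, (u, v) lies on the elliptic curve v² = u³ + 1 (which has j-invariant 0). -/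
/-!
With `t = x²`, the cubic factor is the quotient in the difference of cubes
`(t + a)³ - (t - 1)³ = (a + 1)(3t² + 3(a - 1)t + a² - a + 1)`, so the curve equation says
`y² (t - 1)² = (t - 1)³ - (t + a)³`; dividing by `(t - 1)⁶` gives `v² = u³ + 1`.
-/

theorem add_cube_sub_sub_one_cube {R : Type*} [CommRing R] (a t : R) :
    (t + a) ^ 3 - (t - 1) ^ 3 = (a + 1) * (3 * t ^ 2 + 3 * (a - 1) * t + a ^ 2 - a + 1) := by
  ring

theorem div_sub_one_cube_add_one_eq_sq {K : Type*} [Field K] (a t y : K) (ht : t ≠ 1)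
    (hcurve : y ^ 2 + (a + 1) * (t - 1) * (3 * t ^ 2 + 3 * (a - 1) * t + a ^ 2 - a + 1) = 0) :
    (-(t + a) / (t - 1)) ^ 3 + 1 = (y / (t - 1) ^ 2) ^ 2 := by
  have hne : t - 1 ≠ 0 := sub_ne_zero.mpr ht
  calc (-(t + a) / (t - 1)) ^ 3 + 1 = -((t + a) ^ 3 - (t - 1) ^ 3) * (t - 1) / (t - 1) ^ 4 := by
        field_simp
        ring
    _ = y ^ 2 / (t - 1) ^ 4 := by
        rw [add_cube_sub_sub_one_cube]
        congr 1
        linear_combination -hcurve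
    _ = (y / (t - 1) ^ 2) ^ 2 := by rw [div_pow, ← pow_mul]

/-- The degree-2 morphism from the genus-two curve
`y² + (a+1)(x²−1)(3x⁴ + 3(a−1)x² + a² − a + 1) = 0` to the elliptic curve `v² = u³ + 1`. -/
theorem genus_two_to_j_zero (a x y : ℂ) (hx : x ^ 2 ≠ 1)
    (hcurve : y ^ 2 + (a + 1) * (x ^ 2 - 1) *
      (3 * x ^ 4 + 3 * (a - 1) * x ^ 2 + a ^ 2 - a + 1) = 0) :
    let u : ℂ := -(x ^ 2 + a) / (x ^ 2 - 1)
    let v : ℂ := y / (x ^ 2 - 1) ^ 2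
    u ^ 3 + 1 = v ^ 2 :=
  div_sub_one_cube_add_one_eq_sq a (x ^ 2) y hx (by linear_combination hcurve)
end

section
/- For every complex number x with x² − x + 1 ≠ 0, (x − 2)·(x + 1) ≠ 0, setting z = −48/(x² − x + 1) one has z + 16 ≠ 0 and the identity 1728·z/(z + 16)³ = −81·(x² − x + 1)²/(4·(x − 2)³·(x + 1)³). -/
section Pullback

variable {K : Type*} [Field K]

theorem neg_48_div_add_16 {x : K} (hq : x ^ 2 - x + 1 ≠ 0) :
    -48 / (x ^ 2 - x + 1) + 16 = 16 * ((x - 2) * (x + 1)) / (x ^ 2 - x + 1) := by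
  rw [div_add' _ _ _ hq]
  ring

variable [CharZero K]

theorem neg_48_div_add_16_ne_zero {x : K} (hq : x ^ 2 - x + 1 ≠ 0)
    (hc : (x - 2) * (x + 1) ≠ 0) : -48 / (x ^ 2 - x + 1) + 16 ≠ 0 := by
  rw [neg_48_div_add_16 hq]
  exact div_ne_zero (mul_ne_zero (by norm_num) hc) hq

theorem hauptmodul_two_comp_neg_48_div {x : K} (hq : x ^ 2 - x + 1 ≠ 0)
    (hc : (x - 2) * (x + 1) ≠ 0) :
    1728 * (-48 / (x ^ 2 - x + 1)) / (-48 / (x ^ 2 - x + 1) + 16) ^ 3 =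
      -(81 * (x ^ 2 - x + 1) ^ 2) / (4 * (x - 2) ^ 3 * (x + 1) ^ 3) := by
  have h2 : x - 2 ≠ 0 := left_ne_zero_of_mul hc
  have h1 : x + 1 ≠ 0 := right_ne_zero_of_mul hc
  rw [neg_48_div_add_16 hq]
  field_simp
  ring

end Pullback

/-- Hauptmodul identity: with `z = −48/(x² − x + 1)`, one has `z + 16 ≠ 0` and
`1728z/(z+16)³ = −81(x² − x + 1)²/(4(x−2)³(x+1)³)`. -/
theorem hauptmodul_level2 (x : ℂ) (hq : x ^ 2 - x + 1 ≠ 0)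
    (hc : (x - 2) * (x + 1) ≠ 0) :
    let z : ℂ := -48 / (x ^ 2 - x + 1)
    z + 16 ≠ 0 ∧
      1728 * z / (z + 16) ^ 3 =
        -(81 * (x ^ 2 - x + 1) ^ 2) / (4 * (x - 2) ^ 3 * (x + 1) ^ 3) :=
  ⟨neg_48_div_add_16_ne_zero hq hc, hauptmodul_two_comp_neg_48_div hq hc⟩
end

section
/- For every complex number x with x² − x + 1 ≠ 0 and 16·x² − 16·x + 13 ≠ 0, setting z = −48/(x² − x + 1) one has z + 256 ≠ 0 and the identity 1728·z²/(z + 256)³ = 972·(x² − x + 1)/(16·x² − 16·x + 13)³. -/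
/-!
Both sides depend on `x` only through `q = x² − x + 1`, because `16x² − 16x + 13 = 16q − 3`.
With `z = −48/q` one has `z + 256 = 16(16q − 3)/q`, so the left side is
`1728 · 48² q³ / (16³ q² (16q − 3)³) = 972 q/(16q − 3)³`.
-/

section Hauptmodul

variable {K : Type*} [Field K] {q : K}

theorem neg_div_add_eq_of_ne_zero (hq : q ≠ 0) :
    -48 / q + 256 = 16 * (16 * q - 3) / q := by
  field_simp
  ring

variable [NeZero (2 : K)]

theorem sixteen_ne_zero_of_two : (16 : K) ≠ 0 := by
  rw [show (16 : K) = 2 ^ 4 by norm_num]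
  exact pow_ne_zero 4 two_ne_zero

theorem neg_div_add_ne_zero (hq : q ≠ 0) (hc : 16 * q - 3 ≠ 0) : -48 / q + 256 ≠ 0 := by
  rw [neg_div_add_eq_of_ne_zero hq]
  exact div_ne_zero (mul_ne_zero sixteen_ne_zero_of_two hc) hq

theorem hauptmodul_level2_eq (hq : q ≠ 0) :
    1728 * (-48 / q) ^ 2 / (-48 / q + 256) ^ 3 = 972 * q / (16 * q - 3) ^ 3 := by
  have h16 : (16 : K) ≠ 0 := sixteen_ne_zero_of_two
  rw [neg_div_add_eq_of_ne_zero hq]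
  field_simp
  ring

end Hauptmodul

/-- Companion Hauptmodul identity: with `z = −48/(x² − x + 1)`, one has `z + 256 ≠ 0` and
`1728z²/(z+256)³ = 972(x² − x + 1)/(16x² − 16x + 13)³`. -/
theorem hauptmodul_level2_companion (x : ℂ) (hq : x ^ 2 - x + 1 ≠ 0)
    (hc : 16 * x ^ 2 - 16 * x + 13 ≠ 0) :
    let z : ℂ := -48 / (x ^ 2 - x + 1)
    z + 256 ≠ 0 ∧
      1728 * z ^ 2 / (z + 256) ^ 3 =
        972 * (x ^ 2 - x + 1) / (16 * x ^ 2 - 16 * x + 13) ^ 3 := by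
  have hcq : 16 * x ^ 2 - 16 * x + 13 = 16 * (x ^ 2 - x + 1) - 3 := by ring
  rw [hcq] at hc ⊢
  exact ⟨neg_div_add_ne_zero hq hc, hauptmodul_level2_eq hq⟩
end

section
/- As formal power series in x (equivalently, for real or complex x of sufficiently small absolute value), the quadratic hypergeometric transformation ₂F₁(1/4, 1/4; 1; 4·x·(1 − x)) = ₂F₁(1/2, 1/2; 1; x) holds. -/
open Polynomial Finset

/-- coefficient of `(1-X)^k` -/
lemma coeff_one_sub_pow (k m : ℕ) :
    ((1 - X : Polynomial ℂ) ^ k).coeff m = (-1) ^ m * (k.choose m : ℂ) := by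
  have h : (1 - X : Polynomial ℂ) = (-1 : ℂ[X]) * (X + C (-1)) := by simp [C_neg]; ring
  rw [h, mul_pow, ← C_1, ← C_neg, ← C_pow, coeff_C_mul, coeff_X_add_C_pow]
  rcases le_or_gt m k with hmk | hmk
  · have : (-1 : ℂ) ^ k * ((-1) ^ (k - m)) = (-1) ^ m := by
      rw [← pow_add]
      have : k + (k - m) = m + 2 * (k - m) := by omega
      rw [this, pow_add, pow_mul]
      simp
    rw [← mul_assoc, this]
  · simp [Nat.choose_eq_zero_of_lt hmk]

lemma coeff_quad (k m : ℕ) :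
    ((4 * (X * (1 - X)) : Polynomial ℂ) ^ k).coeff (k + m) =
      4 ^ k * ((-1) ^ m * (k.choose m : ℂ)) := by
  have h : (4 * (X * (1 - X)) : Polynomial ℂ) ^ k =
      C ((4 : ℂ) ^ k) * (X ^ k * ((1 - X) ^ k)) := by
    rw [show (4 * (X * (1 - X)) : Polynomial ℂ) = C (4 : ℂ) * (X * (1 - X)) by
      rw [map_ofNat C 4]]
    rw [mul_pow, mul_pow, map_pow]
  rw [h, coeff_C_mul, add_comm k m, coeff_X_pow_mul, coeff_one_sub_pow]

/-- `b k = ((1/4)_k)^2 / (k!)^2 * 4^k` -/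
noncomputable def hqB (k : ℕ) : ℂ :=
  ((ascPochhammer ℂ k).eval (1 / 4 : ℂ)) ^ 2 / ((k.factorial : ℂ)) ^ 2 * 4 ^ k

lemma hqB_rec (k : ℕ) :
    4 * hqB (k + 1) * ((k : ℂ) + 1) ^ 2 = hqB k * (4 * k + 1) ^ 2 := by
  unfold hqB
  have hf : ((k.factorial : ℂ)) ≠ 0 := by
    exact_mod_cast Nat.cast_ne_zero.mpr k.factorial_ne_zero
  have hk1 : ((k : ℂ) + 1) ≠ 0 := Nat.cast_add_one_ne_zero k
  rw [ascPochhammer_succ_eval, Nat.factorial_succ]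
  push_cast
  field_simp
  ring

lemma hqB_zero : hqB 0 = 1 := by simp [hqB]

/-- the key per-term telescoping identity (certificate form) -/
lemma hq_key (k m : ℕ) :
    4 * ((k : ℂ) + m + 1) ^ 2 * (hqB k * ((-1 : ℂ) ^ (m + 1) * ((k.choose (m + 1) : ℕ) : ℂ)))
      - (2 * ((k : ℂ) + m) + 1) ^ 2 * (hqB k * ((-1 : ℂ) ^ m * ((k.choose m : ℕ) : ℂ)))
    = 4 * ((k : ℂ) + 1) * ((m : ℂ) - k - 1) * ((-1 : ℂ) ^ m * hqB (k + 1)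
          * (((k + 1).choose m : ℕ) : ℂ))
      - 4 * (k : ℂ) * ((m : ℂ) + 1 - k) * ((-1 : ℂ) ^ (m + 1) * hqB k
          * ((k.choose (m + 1) : ℕ) : ℂ)) := by
  have hb := hqB_rec k
  rcases le_or_gt m k with hmk | hmk
  · -- main case : use the two binomial recurrences
    have h1 : ((k.choose (m + 1) : ℕ) : ℂ) * ((m : ℂ) + 1)
        = ((k.choose m : ℕ) : ℂ) * ((k : ℂ) - m) := by
      have hc : (((k.choose (m + 1)) * (m + 1) : ℕ) : ℂ)
          = (((k.choose m) * (k - m) : ℕ) : ℂ) :=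
        congrArg (Nat.cast : ℕ → ℂ) (Nat.choose_succ_right_eq k m)
      push_cast [Nat.cast_sub hmk] at hc
      exact hc
    have h2 : ((k.choose m : ℕ) : ℂ) * ((k : ℂ) + 1)
        = (((k + 1).choose m : ℕ) : ℂ) * ((k : ℂ) + 1 - m) := by
      have hc : (((k.choose m) * (k + 1) : ℕ) : ℂ)
          = ((((k + 1).choose m) * (k + 1 - m) : ℕ) : ℂ) :=
        congrArg (Nat.cast : ℕ → ℂ) (Nat.choose_mul_succ_eq k m)
      push_cast [Nat.cast_sub (by omega : m ≤ k + 1)] at hc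
      exact hc
    linear_combination (-(4 : ℂ) * ((m : ℂ) + 3 * k + 1) * (-1 : ℂ) ^ m * hqB k) * h1
      + (-(4 : ℂ) * ((k : ℂ) + 1) * (-1 : ℂ) ^ m * hqB (k + 1)) * h2
      + ((-1 : ℂ) ^ m * ((k.choose m : ℕ) : ℂ)) * hb
  · -- degenerate cases
    have hc0 : k.choose m = 0 := Nat.choose_eq_zero_of_lt hmk
    have hc1 : k.choose (m + 1) = 0 := Nat.choose_eq_zero_of_lt (by omega)
    rcases eq_or_lt_of_le (Nat.succ_le_of_lt hmk) with h | h
    · rw [hc0, hc1, ← h]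
      push_cast
      ring
    · have hc2 : (k + 1).choose m = 0 := Nat.choose_eq_zero_of_lt h
      rw [hc0, hc1, hc2]
      push_cast
      ring

lemma hq_tel (n : ℕ) :
    ∑ k ∈ Finset.range (n + 1),
        (4 * ((n : ℂ) + 1) ^ 2 * (hqB k * ((-1 : ℂ) ^ (n + 1 - k) * (k.choose (n + 1 - k) : ℂ)))
          - (2 * (n : ℂ) + 1) ^ 2 * (hqB k * ((-1 : ℂ) ^ (n - k) * (k.choose (n - k) : ℂ))))
      = -(4 * ((n : ℂ) + 1) ^ 2 * hqB (n + 1)) := by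
  have htel := Finset.sum_range_sub
    (f := fun j => 4 * (j : ℂ) * ((n : ℂ) + 1 - 2 * (j : ℂ)) *
      ((-1 : ℂ) ^ (n + 1 - j) * (hqB j * ((j.choose (n + 1 - j) : ℕ) : ℂ)))) (n + 1)
  have hsum : ∑ k ∈ Finset.range (n + 1),
      (4 * ((n : ℂ) + 1) ^ 2 * (hqB k * ((-1 : ℂ) ^ (n + 1 - k) * (k.choose (n + 1 - k) : ℂ)))
        - (2 * (n : ℂ) + 1) ^ 2 * (hqB k * ((-1 : ℂ) ^ (n - k) * (k.choose (n - k) : ℂ))))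
      = ∑ k ∈ Finset.range (n + 1),
        ((fun (j : ℕ) => 4 * (j : ℂ) * ((n : ℂ) + 1 - 2 * (j : ℂ)) *
          ((-1 : ℂ) ^ (n + 1 - j) * (hqB j * ((j.choose (n + 1 - j) : ℕ) : ℂ)))) (k + 1)
        - (fun (j : ℕ) => 4 * (j : ℂ) * ((n : ℂ) + 1 - 2 * (j : ℂ)) *
          ((-1 : ℂ) ^ (n + 1 - j) * (hqB j * ((j.choose (n + 1 - j) : ℕ) : ℂ)))) k) := by
    apply Finset.sum_congr rfl
    intro k hk
    have hk' : k ≤ n := by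
      simpa [Nat.lt_succ_iff] using hk
    obtain ⟨m, hm⟩ : ∃ m, n = k + m := ⟨n - k, by omega⟩
    subst hm
    have e1 : k + m - k = m := by omega
    have e2 : k + m + 1 - k = m + 1 := by omega
    have e3 : k + m + 1 - (k + 1) = m := by omega
    simp only [e1, e2, e3]
    push_cast
    linear_combination hq_key k m
  rw [hsum, htel]
  have e4 : n + 1 - (n + 1) = 0 := by omega
  simp only [e4, Nat.choose_zero_right]
  push_cast
  ring

lemma hq_S (n : ℕ) :
    ∑ k ∈ Finset.range (n + 1), hqB k * ((-1 : ℂ) ^ (n - k) * (k.choose (n - k) : ℂ))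
      = ((ascPochhammer ℂ n).eval (1 / 2 : ℂ)) ^ 2 / ((n.factorial : ℂ)) ^ 2 := by
  induction n with
  | zero => simp [hqB]
  | succ n ih =>
    have htel := hq_tel n
    rw [Finset.sum_sub_distrib, ← Finset.mul_sum, ← Finset.mul_sum] at htel
    have hsplit : ∑ k ∈ Finset.range (n + 2),
          hqB k * ((-1 : ℂ) ^ (n + 1 - k) * (k.choose (n + 1 - k) : ℂ))
        = (∑ k ∈ Finset.range (n + 1),
            hqB k * ((-1 : ℂ) ^ (n + 1 - k) * (k.choose (n + 1 - k) : ℂ))) + hqB (n + 1) := by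
      rw [Finset.sum_range_succ]
      simp
    have key : 4 * ((n : ℂ) + 1) ^ 2 * (∑ k ∈ Finset.range (n + 2),
          hqB k * ((-1 : ℂ) ^ (n + 1 - k) * (k.choose (n + 1 - k) : ℂ)))
        = (2 * (n : ℂ) + 1) ^ 2 * (∑ k ∈ Finset.range (n + 1),
            hqB k * ((-1 : ℂ) ^ (n - k) * (k.choose (n - k) : ℂ))) := by
      rw [hsplit]
      linear_combination htel
    rw [ih] at key
    have hf : ((n.factorial : ℂ)) ≠ 0 := Nat.cast_ne_zero.mpr n.factorial_ne_zero
    have hk1 : ((n : ℂ) + 1) ≠ 0 := Nat.cast_add_one_ne_zero n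
    have h4 : (4 * ((n : ℂ) + 1) ^ 2) ≠ 0 := by
      apply mul_ne_zero (by norm_num) (pow_ne_zero _ hk1)
    apply mul_left_cancel₀ h4
    rw [key, ascPochhammer_succ_eval, Nat.factorial_succ]
    push_cast
    field_simp
    ring

/-- Quadratic hypergeometric transformation, as formal power series:
`₂F₁(1/4, 1/4; 1; 4x(1−x)) = ₂F₁(1/2, 1/2; 1; x)`, stated coefficientwise. The
coefficient of `xⁿ` in the left-hand side is `∑_{k≤n} ((1/4)_k)²/(k!)² · [xⁿ](4x(1−x))ᵏ`
(terms with `k > n` vanish), and the coefficient of `xⁿ` in the right-hand side is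
`((1/2)_n)²/(n!)²`; here `(a)_k (b)_k/((1)_k k!) = (a)_k (b)_k/(k!)²`. -/
theorem hypergeometric_quadratic_transformation (n : ℕ) :
    ∑ k ∈ Finset.range (n + 1),
      ((ascPochhammer ℂ k).eval (1 / 4 : ℂ)) ^ 2 / ((k.factorial : ℂ)) ^ 2 *
        ((4 * (X * (1 - X)) : Polynomial ℂ) ^ k).coeff n =
    ((ascPochhammer ℂ n).eval (1 / 2 : ℂ)) ^ 2 / ((n.factorial : ℂ)) ^ 2 := by
  rw [← hq_S n]
  apply Finset.sum_congr rfl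
  intro k hk
  have hk' : k ≤ n := by simpa [Nat.lt_succ_iff] using hk
  have hn : n = k + (n - k) := by omega
  rw [show ((4 * (X * (1 - X)) : Polynomial ℂ) ^ k).coeff n
      = ((4 * (X * (1 - X)) : Polynomial ℂ) ^ k).coeff (k + (n - k)) by rw [← hn]]
  rw [coeff_quad]
  unfold hqB
  ring
end

section
/- As formal power series in x, Clausen's identity ₃F₂(1/2, 1/2, 1/2; 1, 1; x) = ₂F₁(1/4, 1/4; 1; x)² holds; equivalently, for all n ≥ 0, ((1/2)_n)³/(n!)³ = Σ_{k=0}^{n} ((1/4)_k (1/4)_k / (k!)² ) · ((1/4)_{n−k} (1/4)_{n−k} / ((n−k)!)²). -/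
open Polynomial Finset

/-- The `₂F₁(1/4,1/4;1;x)` coefficient. -/
noncomputable def ccl (k : ℕ) : ℂ :=
  ((ascPochhammer ℂ k).eval (1 / 4 : ℂ)) ^ 2 / ((k.factorial : ℂ)) ^ 2

lemma ccl_zero : ccl 0 = 1 := by simp [ccl]

lemma ccl_one : ccl 1 = 1 / 16 := by
  simp [ccl, ascPochhammer_one]
  norm_num

lemma factorial_cast_ne_zero (k : ℕ) : ((k.factorial : ℂ)) ≠ 0 := by
  exact_mod_cast Nat.cast_ne_zero.mpr k.factorial_ne_zero

lemma ccl_succ (k : ℕ) :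
    ccl (k + 1) = ccl k * ((k : ℂ) + 1 / 4) ^ 2 / ((k : ℂ) + 1) ^ 2 := by
  have hf := factorial_cast_ne_zero k
  have hk1 : ((k : ℂ) + 1) ≠ 0 := Nat.cast_add_one_ne_zero k
  simp only [ccl, ascPochhammer_succ_eval, Nat.factorial_succ]
  push_cast
  field_simp
  ring

lemma ccl_succ_mul (k : ℕ) :
    ccl (k + 1) * ((k : ℂ) + 1) ^ 2 = ccl k * ((k : ℂ) + 1 / 4) ^ 2 := by
  have hk1 : ((k : ℂ) + 1) ≠ 0 := Nat.cast_add_one_ne_zero k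
  rw [ccl_succ]
  field_simp

/-- The certificate rational function times `F`. -/
noncomputable def Gcl (n k : ℕ) : ℂ :=
  ((k : ℂ) ^ 2 *
    (2 * (k : ℂ) ^ 3 - 4 * (k : ℂ) ^ 2 + 13 / 8 * (k : ℂ) - 3 / 16
      - 7 * (n : ℂ) * (k : ℂ) ^ 2 + 17 / 2 * (n : ℂ) * (k : ℂ) - 27 / 16 * (n : ℂ)
      + 8 * (n : ℂ) ^ 2 * (k : ℂ) - 9 / 2 * (n : ℂ) ^ 2 - 3 * (n : ℂ) ^ 3)
    * ccl k * ccl (n - k)) / ((n : ℂ) + 1 - (k : ℂ)) ^ 2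

lemma Gcl_zero (n : ℕ) : Gcl n 0 = 0 := by simp [Gcl]

set_option maxHeartbeats 1600000 in
lemma step_cl (n k : ℕ) (h : k < n) :
    ((n : ℂ) + 1) ^ 3 * (ccl k * ccl (n + 1 - k))
      - ((n : ℂ) + 1 / 2) ^ 3 * (ccl k * ccl (n - k))
      = Gcl n (k + 1) - Gcl n k := by
  obtain ⟨m, rfl⟩ : ∃ m, n = k + (m + 1) := ⟨n - k - 1, by omega⟩
  have e1 : k + (m + 1) - k = m + 1 := by omega
  have e2 : k + (m + 1) + 1 - k = m + 1 + 1 := by omega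
  have e3 : k + (m + 1) - (k + 1) = m := by omega
  have h1 := ccl_succ_mul m
  have h2 := ccl_succ_mul (m + 1)
  have h3 := ccl_succ_mul k
  have hm1 : ((m : ℂ) + 1) ≠ 0 := Nat.cast_add_one_ne_zero m
  have hm2 : ((m : ℂ) + 1 + 1) ≠ 0 := by
    intro hh
    apply Nat.cast_add_one_ne_zero (m + 1) (R := ℂ)
    push_cast
    linear_combination hh
  simp only [Gcl]
  rw [e1, e2, e3]
  push_cast at h1 h2 h3 ⊢
  have hA : ((k : ℂ) + ((m : ℂ) + 1) + 1 - ((k : ℂ) + 1)) = (m : ℂ) + 1 := by ring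
  have hB : ((k : ℂ) + ((m : ℂ) + 1) + 1 - (k : ℂ)) = (m : ℂ) + 1 + 1 := by ring
  rw [hA, hB]
  rw [div_sub_div _ _ (pow_ne_zero 2 hm1) (pow_ne_zero 2 hm2),
    eq_div_iff (mul_ne_zero (pow_ne_zero 2 hm1) (pow_ne_zero 2 hm2))]
  linear_combination
    (((k : ℂ) + ((m : ℂ) + 1) + 1) ^ 3 * ccl k * ((m : ℂ) + 1) ^ 2) * h2
    + (((k : ℂ) + ((m : ℂ) + 1) + 1) ^ 3 * ccl k * ((m : ℂ) + 1 + 1 / 4) ^ 2) * h1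
    - (((k : ℂ) + ((m : ℂ) + 1) + 1 / 2) ^ 3 * ccl k * ((m : ℂ) + 1 + 1) ^ 2) * h1
    - ((2 * ((k : ℂ) + 1) ^ 3 - 4 * ((k : ℂ) + 1) ^ 2 + 13 / 8 * ((k : ℂ) + 1) - 3 / 16
        - 7 * ((k : ℂ) + ((m : ℂ) + 1)) * ((k : ℂ) + 1) ^ 2
        + 17 / 2 * ((k : ℂ) + ((m : ℂ) + 1)) * ((k : ℂ) + 1) - 27 / 16 * ((k : ℂ) + ((m : ℂ) + 1))
        + 8 * ((k : ℂ) + ((m : ℂ) + 1)) ^ 2 * ((k : ℂ) + 1) - 9 / 2 * ((k : ℂ) + ((m : ℂ) + 1)) ^ 2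
        - 3 * ((k : ℂ) + ((m : ℂ) + 1)) ^ 3) * ccl m * ((m : ℂ) + 1 + 1) ^ 2) * h3
    + ((k : ℂ) ^ 2 *
        (2 * (k : ℂ) ^ 3 - 4 * (k : ℂ) ^ 2 + 13 / 8 * (k : ℂ) - 3 / 16
          - 7 * ((k : ℂ) + ((m : ℂ) + 1)) * (k : ℂ) ^ 2
          + 17 / 2 * ((k : ℂ) + ((m : ℂ) + 1)) * (k : ℂ) - 27 / 16 * ((k : ℂ) + ((m : ℂ) + 1))
          + 8 * ((k : ℂ) + ((m : ℂ) + 1)) ^ 2 * (k : ℂ) - 9 / 2 * ((k : ℂ) + ((m : ℂ) + 1)) ^ 2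
          - 3 * ((k : ℂ) + ((m : ℂ) + 1)) ^ 3) * ccl k) * h1

lemma key_cl (n : ℕ) : ∀ k ≤ n,
    ((n : ℂ) + 1) ^ 3 * (∑ j ∈ Finset.range k, ccl j * ccl (n + 1 - j))
      - ((n : ℂ) + 1 / 2) ^ 3 * (∑ j ∈ Finset.range k, ccl j * ccl (n - j))
      = Gcl n k := by
  intro k hk
  induction k with
  | zero => simp [Gcl_zero]
  | succ k ih =>
    have hkn : k < n := hk
    have ih' := ih (le_of_lt hkn)
    rw [Finset.sum_range_succ, Finset.sum_range_succ]
    have hs := step_cl n k hkn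
    linear_combination ih' + hs

lemma final_cl (n : ℕ) :
    ((n : ℂ) + 1) ^ 3 * (∑ j ∈ Finset.range (n + 2), ccl j * ccl (n + 1 - j))
      = ((n : ℂ) + 1 / 2) ^ 3 * (∑ j ∈ Finset.range (n + 1), ccl j * ccl (n - j)) := by
  have key := key_cl n n le_rfl
  rw [Finset.sum_range_succ, Finset.sum_range_succ (n := n)]
  rw [Finset.sum_range_succ (n := n)]
  have e1 : n + 1 - n = 1 := by omega
  have e2 : n + 1 - (n + 1) = 0 := by omega
  have e3 : n - n = 0 := by omega
  rw [e1, e2, e3, ccl_zero, ccl_one]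
  have hGnn : Gcl n n =
      (n : ℂ) ^ 2 *
        (2 * (n : ℂ) ^ 3 - 4 * (n : ℂ) ^ 2 + 13 / 8 * (n : ℂ) - 3 / 16
          - 7 * (n : ℂ) * (n : ℂ) ^ 2 + 17 / 2 * (n : ℂ) * (n : ℂ) - 27 / 16 * (n : ℂ)
          + 8 * (n : ℂ) ^ 2 * (n : ℂ) - 9 / 2 * (n : ℂ) ^ 2 - 3 * (n : ℂ) ^ 3)
        * ccl n := by
    simp only [Gcl, e3, ccl_zero]
    have h1 : ((n : ℂ) + 1 - (n : ℂ)) = 1 := by ring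
    rw [h1]
    ring
  rw [hGnn] at key
  linear_combination key + ((n : ℂ) + 1) * ccl_succ_mul n

lemma sum_cl (n : ℕ) :
    ((ascPochhammer ℂ n).eval (1 / 2 : ℂ)) ^ 3 / ((n.factorial : ℂ)) ^ 3 =
      ∑ j ∈ Finset.range (n + 1), ccl j * ccl (n - j) := by
  induction n with
  | zero => simp [ccl_zero]
  | succ n ih =>
    have hn1 : ((n : ℂ) + 1) ≠ 0 := Nat.cast_add_one_ne_zero n
    have hf := factorial_cast_ne_zero n
    have hfin := final_cl n
    rw [show n + 2 = n + 1 + 1 from rfl] at hfin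
    have hlhs : ((ascPochhammer ℂ (n + 1)).eval (1 / 2 : ℂ)) ^ 3
        / (((n + 1).factorial : ℂ)) ^ 3
        = ((ascPochhammer ℂ n).eval (1 / 2 : ℂ)) ^ 3 / ((n.factorial : ℂ)) ^ 3
          * ((n : ℂ) + 1 / 2) ^ 3 / ((n : ℂ) + 1) ^ 3 := by
      rw [ascPochhammer_succ_eval, Nat.factorial_succ]
      push_cast
      field_simp
      ring
    rw [hlhs, ih]
    have h3 : (((n : ℂ) + 1) ^ 3) ≠ 0 := pow_ne_zero 3 hn1
    rw [div_eq_iff h3]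
    linear_combination -hfin

/-- Clausen's identity `₃F₂(1/2,1/2,1/2;1,1;x) = ₂F₁(1/4,1/4;1;x)²`, stated
coefficientwise: for all `n ≥ 0`,
`((1/2)_n)³/(n!)³ = ∑_{k=0}^{n} ((1/4)_k)²/(k!)² · ((1/4)_{n−k})²/((n−k)!)²`. -/
theorem clausen_identity (n : ℕ) :
    ((ascPochhammer ℂ n).eval (1 / 2 : ℂ)) ^ 3 / ((n.factorial : ℂ)) ^ 3 =
    ∑ k ∈ Finset.range (n + 1),
      ((ascPochhammer ℂ k).eval (1 / 4 : ℂ)) ^ 2 / ((k.factorial : ℂ)) ^ 2 *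
        (((ascPochhammer ℂ (n - k)).eval (1 / 4 : ℂ)) ^ 2 /
          (((n - k).factorial : ℂ)) ^ 2) := by
  simpa [ccl] using sum_cl n
end
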